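/- The submodule 6ℤ of the ℤ-module ℤ is not a 1-absorbing primary submodule, even though it is the intersection of the 1-absorbing primary submodules 2ℤ and 3ℤ. -/

import Mathlib

open Submodule

section Defs

variable {R : Type*} [CommRing R]

/-- A prime submodule: proper, and `a • m ∈ N` implies `m ∈ N` or `a ∈ (N :_R M)`. -/
def IsPrimeSubmodule {M : Type*} [AddCommGroup M] [Module R M] (N : Submodule R M) : Prop :=
  N ≠ ⊤ ∧ ∀ (a : R) (m : M), a • m ∈ N → m ∈ N ∨ a ∈ N.colon ⊤

/-- The `M`-radical of `N`: intersection of all prime submodules containing `N`. -/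
def Mrad {M : Type*} [AddCommGroup M] [Module R M] (N : Submodule R M) : Submodule R M :=
  sInf {P | IsPrimeSubmodule P ∧ N ≤ P}

/-- A 1-absorbing primary submodule. -/
def Is1AbsPrimary {M : Type*} [AddCommGroup M] [Module R M] (N : Submodule R M) : Prop :=
  N ≠ ⊤ ∧ ∀ a b : R, ¬ IsUnit a → ¬ IsUnit b → ∀ m : M,
    (a * b) • m ∈ N → a * b ∈ N.colon ⊤ ∨ m ∈ Mrad N

/-- A 2-absorbing primary submodule. -/
def Is2AbsPrimary {M : Type*} [AddCommGroup M] [Module R M] (N : Submodule R M) : Prop :=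
  N ≠ ⊤ ∧ ∀ (a b : R) (m : M), (a * b) • m ∈ N →
    a * b ∈ N.colon ⊤ ∨ a • m ∈ Mrad N ∨ b • m ∈ Mrad N

/-- A 1-absorbing primary ideal. -/
def Is1AbsPrimaryIdeal {A : Type*} [CommRing A] (I : Ideal A) : Prop :=
  I ≠ ⊤ ∧ ∀ a b c : A, ¬ IsUnit a → ¬ IsUnit b → ¬ IsUnit c →
    a * b * c ∈ I → a * b ∈ I ∨ c ∈ I.radical

/-- A multiplication module: every submodule `N` satisfies `N = (N :_R M) M`. -/
def IsMultiplicationModule (R M : Type*) [CommRing R] [AddCommGroup M] [Module R M] : Prop :=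
  ∀ N : Submodule R M, N = (N.colon ⊤) • (⊤ : Submodule R M)

end Defs

variable {R M : Type*} [CommRing R] [AddCommGroup M] [Module R M]

theorem le_mrad (N : Submodule R M) : N ≤ Mrad N :=
  le_sInf fun _ hP => hP.2

theorem mrad_le {N P : Submodule R M}
    (hP : IsPrimeSubmodule P) (hNP : N ≤ P) : Mrad N ≤ P :=
  sInf_le ⟨hP, hNP⟩

theorem IsPrimeSubmodule.is1AbsPrimary {N : Submodule R M} (hN : IsPrimeSubmodule N) :
    Is1AbsPrimary N :=
  ⟨hN.1, fun a b _ _ m h => (hN.2 (a * b) m h).symm.imp_right (le_mrad N ·)⟩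

theorem Ideal.IsPrime.isPrimeSubmodule {I : Ideal R} (hI : I.IsPrime) : IsPrimeSubmodule I := by
  refine ⟨hI.ne_top, fun a m h => ?_⟩
  rw [Set.top_eq_univ, colon_univ]
  exact (hI.mem_or_mem h).symm

theorem isPrimeSubmodule_span_prime {p : R} (hp : Prime p) : IsPrimeSubmodule (Ideal.span {p}) :=
  ((Ideal.span_singleton_prime hp.ne_zero).mpr hp).isPrimeSubmodule

/-- The witness is `(p * p) • q ∈ (p * q)`: `p * p ∉ (p * q)`, while `q` lies outside the prime
submodule `(p)` containing `(p * q)`. -/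
theorem not_is1AbsPrimary_span_mul_of_prime [IsDomain R] {p q : R} (hp : Prime p)
    (hq : Prime q) (hpq : ¬ p ∣ q) : ¬ Is1AbsPrimary (Ideal.span {p * q}) := by
  rintro ⟨-, habs⟩
  have hmem : (p * p) • q ∈ Ideal.span {p * q} :=
    Ideal.mem_span_singleton.mpr ⟨p, by rw [smul_eq_mul]; ring⟩
  rcases habs p p hp.not_isUnit hp.not_isUnit q hmem with hpp | hmrad
  · rw [Set.top_eq_univ, colon_univ, Ideal.mem_span_singleton,
      mul_dvd_mul_iff_left hp.ne_zero] at hpp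
    exact hpq (hq.associated_of_dvd hp hpp).symm.dvd
  · have hle : Ideal.span {p * q} ≤ Ideal.span {p} :=
      Ideal.span_singleton_le_span_singleton.mpr (dvd_mul_right p q)
    exact hpq (Ideal.mem_span_singleton.mp (mrad_le (isPrimeSubmodule_span_prime hp) hle hmrad))

theorem six_not_one_abs_primary :
    ¬ Is1AbsPrimary (Ideal.span {(6 : ℤ)} : Ideal ℤ) ∧
      Is1AbsPrimary (Ideal.span {(2 : ℤ)} : Ideal ℤ) ∧
      Is1AbsPrimary (Ideal.span {(3 : ℤ)} : Ideal ℤ) ∧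
      (Ideal.span {(2 : ℤ)} : Ideal ℤ) ⊓ Ideal.span {(3 : ℤ)} = Ideal.span {(6 : ℤ)} := by
  refine ⟨?_, (isPrimeSubmodule_span_prime Int.prime_two).is1AbsPrimary,
    (isPrimeSubmodule_span_prime Int.prime_three).is1AbsPrimary, ?_⟩
  · simpa using not_is1AbsPrimary_span_mul_of_prime Int.prime_two Int.prime_three (by decide)
  · rw [span_singleton_inf_span_singleton]
    rfl
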